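/- For each n ≥ 0 let g(n) ∈ ℤ[p,q,r] be the polynomial Σ_{σ ∈ Q_n(132)} p^{plat(σ)} q^{des(σ)} r^{asc(σ)}, and let g(n|ii) be the same sum restricted to σ ∈ Q_n(132) whose first two letters both equal i. Then for all n ≥ 2: g(n) − p·r·g(n−1) = Σ_{i=1}^{n} g(n|ii) + r·(q−p)·Σ_{i=1}^{n−1} g(n−1|ii). -/

import Mathlib

open scoped Classical

/-- `σ` is a Stirling permutation of order `n`: each letter `1,…,n` occurs
exactly twice and every entry strictly between the two occurrences of a letter
is greater than that letter. -/
def IsStirling (n : ℕ) (σ : List ℕ) : Prop :=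
  (∀ i : ℕ, σ.count i = if 1 ≤ i ∧ i ≤ n then 2 else 0) ∧
  (∀ j k l : ℕ, j < k → k < l → l < σ.length →
    σ.getD j 0 = σ.getD l 0 → σ.getD j 0 < σ.getD k 0)

/-- `σ` contains the pattern word `τ`. -/
def Contains (σ τ : List ℕ) : Prop :=
  ∃ ι : Fin τ.length → Fin σ.length, StrictMono ι ∧
    ∀ s t : Fin τ.length, τ.get s < τ.get t ↔ σ.get (ι s) < σ.get (ι t)

/-- `σ` avoids the pattern word `τ`. -/
def Avoids (σ τ : List ℕ) : Prop := ¬ Contains σ τ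

/-- Number of adjacent pairs of `σ` satisfying the relation `R`. -/
noncomputable def statCount (R : ℕ → ℕ → Prop) (σ : List ℕ) : ℕ :=
  Set.ncard {i : ℕ | i + 1 < σ.length ∧ R (σ.getD i 0) (σ.getD (i + 1) 0)}

/-- Number of descents. -/
noncomputable def desStat (σ : List ℕ) : ℕ := statCount (· > ·) σ
/-- Number of ascents. -/
noncomputable def ascStat (σ : List ℕ) : ℕ := statCount (· < ·) σ
/-- Number of plateaus. -/
noncomputable def platStat (σ : List ℕ) : ℕ := statCount (· = ·) σ

/-- The finite set `Q_n(τ)` of Stirling permutations of order `n` avoiding `τ`. -/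
noncomputable def QAvoid (n : ℕ) (τ : List ℕ) : Finset (List ℕ) :=
  (((List.range n).flatMap fun i => [i + 1, i + 1]).permutations.toFinset).filter
    fun σ => IsStirling n σ ∧ Avoids σ τ

open MvPolynomial in
/-- `g(n) = Σ_{σ ∈ Q_n(132)} p^{plat σ} q^{des σ} r^{asc σ}` with
`p = X 0`, `q = X 1`, `r = X 2`. -/
noncomputable def g132 (n : ℕ) : MvPolynomial (Fin 3) ℤ :=
  ∑ σ ∈ QAvoid n [1, 3, 2], X 0 ^ platStat σ * X 1 ^ desStat σ * X 2 ^ ascStat σ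

open MvPolynomial in
/-- `g(n|w)`: the same sum restricted to `σ ∈ Q_n(132)` beginning with the prefix `w`. -/
noncomputable def g132pre (n : ℕ) (w : List ℕ) : MvPolynomial (Fin 3) ℤ :=
  ∑ σ ∈ (QAvoid n [1, 3, 2]).filter (fun σ => w <+: σ),
    X 0 ^ platStat σ * X 1 ^ desStat σ * X 2 ^ ascStat σ

lemma statSet_finite (R : ℕ → ℕ → Prop) (σ : List ℕ) :
    {i : ℕ | i + 1 < σ.length ∧ R (σ.getD i 0) (σ.getD (i + 1) 0)}.Finite :=
  Set.Finite.subset (Set.finite_Iio σ.length) (fun i hi => by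
    have := hi.1; simp only [Set.mem_Iio]; omega)

lemma statCount_short (R : ℕ → ℕ → Prop) (σ : List ℕ) (h : σ.length ≤ 1) :
    statCount R σ = 0 := by
  unfold statCount
  convert Set.ncard_empty ℕ
  ext i; simp only [Set.mem_setOf_eq, Set.mem_empty_iff_false, iff_false]
  rintro ⟨h1, -⟩; omega

lemma statCount_cons_cons (R : ℕ → ℕ → Prop) (x y : ℕ) (l : List ℕ) :
    statCount R (x :: y :: l) = (if R x y then 1 else 0) + statCount R (y :: l) := by
  unfold statCount
  set T := {i : ℕ | i + 1 < (y :: l).length ∧ R ((y::l).getD i 0) ((y::l).getD (i + 1) 0)} with hT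
  have hzero : (0 : ℕ) ∉ Nat.succ '' T := by
    rintro ⟨k, -, hk⟩; exact Nat.succ_ne_zero k hk
  have hset : {i : ℕ | i + 1 < (x :: y :: l).length ∧ R ((x::y::l).getD i 0) ((x::y::l).getD (i + 1) 0)}
      = (if R x y then {0} else ∅) ∪ (Nat.succ '' T) := by
    ext i
    rcases i with _ | j
    · by_cases hR : R x y <;>
        simp [hR, hzero, List.getD_cons_succ, List.getD_cons_zero]
    · simp only [Set.mem_setOf_eq, Set.mem_union, Set.mem_image, hT]
      constructor
      · rintro ⟨h1, h2⟩
        right; exact ⟨j, ⟨by simpa using h1, by simpa [List.getD_cons_succ] using h2⟩, rfl⟩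
      · rintro (h | ⟨k, hk, hke⟩)
        · split at h <;> simp_all
        · obtain rfl : k = j := Nat.succ_injective hke
          exact ⟨by simpa using hk.1, by simpa [List.getD_cons_succ] using hk.2⟩
  have hd : Disjoint (if R x y then ({0} : Set ℕ) else ∅) (Nat.succ '' T) := by
    split <;> simp only [Set.disjoint_left, Set.mem_singleton_iff, Set.mem_empty_iff_false]
    · rintro a rfl; exact hzero
    · intro a h; exact h.elim
  have hs : (if R x y then ({0} : Set ℕ) else ∅).Finite := by
    split; exacts [Set.finite_singleton 0, Set.finite_empty]
  rw [hset, Set.ncard_union_eq hd hs ((statSet_finite R (y::l)).image _),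
    Set.ncard_image_of_injective _ Nat.succ_injective]
  congr 1
  split <;> simp

lemma statCount_map (R : ℕ → ℕ → Prop) (f : ℕ → ℕ) (l : List ℕ)
    (h : ∀ x ∈ l, ∀ y ∈ l, R (f x) (f y) ↔ R x y) :
    statCount R (l.map f) = statCount R l := by
  unfold statCount
  congr 1
  ext i
  simp only [Set.mem_setOf_eq, List.length_map]
  constructor <;> rintro ⟨h1, h2⟩ <;> refine ⟨h1, ?_⟩
  · rwa [List.getD_eq_getElem _ _ (by simp only [List.length_map]; omega), List.getD_eq_getElem _ _ (by simp only [List.length_map]; omega),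
      List.getElem_map, List.getElem_map,
      h _ (List.getElem_mem _) _ (List.getElem_mem _),
      ← List.getD_eq_getElem _ _ (by omega), ← List.getD_eq_getElem _ _ (by omega)] at h2
  · rwa [List.getD_eq_getElem _ _ (by simpa using (by omega : i < l.length)),
      List.getD_eq_getElem _ _ (by simpa using h1),
      List.getElem_map, List.getElem_map,
      h _ (List.getElem_mem _) _ (List.getElem_mem _),
      ← List.getD_eq_getElem _ _ (by omega), ← List.getD_eq_getElem _ _ h1]

lemma contains_132_iff (σ : List ℕ) :
    Contains σ [1, 3, 2] ↔ ∃ i j k : ℕ, i < j ∧ j < k ∧ k < σ.length ∧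
      σ.getD i 0 < σ.getD k 0 ∧ σ.getD k 0 < σ.getD j 0 := by
  have hlen : ([1, 3, 2] : List ℕ).length = 3 := rfl
  constructor
  · rintro ⟨ι, hmono, hiff⟩
    set s0 : Fin ([1,3,2]:List ℕ).length := ⟨0, by decide⟩
    set s1 : Fin ([1,3,2]:List ℕ).length := ⟨1, by decide⟩
    set s2 : Fin ([1,3,2]:List ℕ).length := ⟨2, by decide⟩
    refine ⟨ι s0, ι s1, ι s2, hmono (show s0 < s1 by decide),
      hmono (show s1 < s2 by decide), (ι s2).isLt, ?_, ?_⟩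
    · have := (hiff s0 s2).mp (by decide)
      simp only [List.get_eq_getElem] at this
      rwa [← List.getD_eq_getElem σ 0 (ι s0).isLt, ← List.getD_eq_getElem σ 0 (ι s2).isLt] at this
    · have := (hiff s2 s1).mp (by decide)
      simp only [List.get_eq_getElem] at this
      rwa [← List.getD_eq_getElem σ 0 (ι s2).isLt, ← List.getD_eq_getElem σ 0 (ι s1).isLt] at this
  · rintro ⟨i, j, k, hij, hjk, hk, h1, h2⟩
    have hi : i < σ.length := by omega
    have hj : j < σ.length := by omega
    refine ⟨fun s => if (s : ℕ) = 0 then ⟨i, hi⟩ else if (s : ℕ) = 1 then ⟨j, hj⟩ else ⟨k, hk⟩,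
      ?_, ?_⟩
    · intro s t hst
      have hs3 : (s:ℕ) < 3 := s.isLt
      have ht3 : (t:ℕ) < 3 := t.isLt
      have : (s : ℕ) < (t : ℕ) := hst
      rcases (by omega : (s:ℕ) = 0 ∨ (s:ℕ) = 1 ∨ (s:ℕ) = 2) with h|h|h <;> rcases (by omega : (t:ℕ) = 0 ∨ (t:ℕ) = 1 ∨ (t:ℕ) = 2) with h'|h'|h' <;>
        simp [Fin.lt_def, h, h'] <;> omega
    · rw [List.getD_eq_getElem σ 0 hi, List.getD_eq_getElem σ 0 hk] at h1
      rw [List.getD_eq_getElem σ 0 hj, List.getD_eq_getElem σ 0 hk] at h2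
      have hcase : ∀ u : Fin ([1,3,2] : List ℕ).length,
          u = ⟨0, by decide⟩ ∨ u = ⟨1, by decide⟩ ∨ u = ⟨2, by decide⟩ := by
        intro u
        have h3 : (u:ℕ) < 3 := u.isLt
        rcases (by omega : (u:ℕ)=0 ∨ (u:ℕ)=1 ∨ (u:ℕ)=2) with h|h|h
        exacts [Or.inl (Fin.ext h), Or.inr (Or.inl (Fin.ext h)), Or.inr (Or.inr (Fin.ext h))]
      intro s t
      rcases hcase s with rfl|rfl|rfl <;> rcases hcase t with rfl|rfl|rfl <;>
        simp only [List.get_eq_getElem, Fin.val_mk] <;> norm_num <;> omega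

lemma base_count (n i : ℕ) :
    ((List.range n).flatMap fun i => [i + 1, i + 1]).count i
      = if 1 ≤ i ∧ i ≤ n then 2 else 0 := by
  induction n with
  | zero => rw [if_neg (by omega)]; simp
  | succ m ih =>
    rw [List.range_succ, List.flatMap_append, List.count_append, ih]
    simp only [List.flatMap_cons, List.flatMap_nil, List.append_nil]
    by_cases h1 : i = m + 1
    · subst h1
      simp only [List.count_cons, List.count_nil]
      norm_num
    · have : ([m+1, m+1] : List ℕ).count i = 0 := by
        simp [List.count_cons, h1, Ne.symm h1]
      rw [this]
      by_cases h2 : 1 ≤ i ∧ i ≤ m <;> by_cases h3 : 1 ≤ i ∧ i ≤ m + 1 <;>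
        simp [h2, h3] <;> omega

lemma base_length (n : ℕ) :
    ((List.range n).flatMap fun i => [i + 1, i + 1]).length = 2 * n := by
  induction n with
  | zero => simp
  | succ m ih =>
    rw [List.range_succ, List.flatMap_append, List.length_append, ih]
    simp; omega

lemma stirling_perm {n : ℕ} {σ : List ℕ} (h : IsStirling n σ) :
    σ.Perm ((List.range n).flatMap fun i => [i + 1, i + 1]) := by
  rw [List.perm_iff_count]
  intro i
  rw [h.1 i, base_count]

lemma mem_QAvoid {n : ℕ} {τ σ : List ℕ} :
    σ ∈ QAvoid n τ ↔ IsStirling n σ ∧ Avoids σ τ := by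
  unfold QAvoid
  rw [Finset.mem_filter, List.mem_toFinset, List.mem_permutations]
  exact ⟨fun h => h.2, fun h => ⟨stirling_perm h.1, h⟩⟩

lemma stirling_length {n : ℕ} {σ : List ℕ} (h : IsStirling n σ) : σ.length = 2 * n := by
  rw [(stirling_perm h).length_eq, base_length]

def decb (b x : ℕ) : ℕ := if b < x then x - 1 else x
def incb (a x : ℕ) : ℕ := if a < x then x + 1 else x

lemma decb_lt {b x y : ℕ} (hx : x ≠ b) (hy : y ≠ b) : decb b x < decb b y ↔ x < y := by
  unfold decb; split_ifs <;> omega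

lemma decb_eq {b x y : ℕ} (hx : x ≠ b) (hy : y ≠ b) : decb b x = decb b y ↔ x = y := by
  unfold decb; split_ifs <;> omega

lemma incb_lt {a x y : ℕ} : incb a x < incb a y ↔ x < y := by
  unfold incb; split_ifs <;> omega

lemma incb_eq {a x y : ℕ} : incb a x = incb a y ↔ x = y := by
  unfold incb; split_ifs <;> omega

lemma decb_incb (a x : ℕ) : decb (a + 1) (incb a x) = x := by
  unfold decb incb; split_ifs <;> omega

lemma incb_decb {a x : ℕ} (hx : x ≠ a + 1) : incb a (decb (a + 1) x) = x := by
  unfold decb incb; split_ifs <;> omega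

lemma decb_self (b : ℕ) : decb b b = b := by unfold decb; simp

lemma decb_lt_self {b x : ℕ} : decb b x < b ↔ x < b := by unfold decb; split_ifs <;> omega

lemma decb_eq_iff {a x : ℕ} (hx : x ≠ a + 1) : decb (a+1) x = a ↔ x = a := by
  unfold decb; split_ifs <;> omega

lemma count_map_decb {b : ℕ} {w : List ℕ} (hb : b ∉ w) (i : ℕ) :
    (w.map (decb b)).count i = if i < b then w.count i else w.count (i + 1) := by
  induction w with
  | nil => simp
  | cons x u ih =>
    have hxb : x ≠ b := fun h => hb (h ▸ List.mem_cons_self (a := x) (l := u))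
    have ihu := ih (fun h => hb (List.mem_cons_of_mem x h))
    simp only [List.map_cons, List.count_cons, ihu, beq_iff_eq, decb]
    split_ifs <;> omega

lemma count_map_incb {a : ℕ} (t : List ℕ) (i : ℕ) :
    (t.map (incb a)).count i =
      if i ≤ a then t.count i else if i = a + 1 then 0 else t.count (i - 1) := by
  induction t with
  | nil => simp
  | cons x u ih =>
    simp only [List.map_cons, List.count_cons, ih, beq_iff_eq, incb]
    split_ifs <;> omega

lemma notmem_map_incb {a : ℕ} (t : List ℕ) : a + 1 ∉ t.map (incb a) := by
  intro h
  have := (List.count_pos_iff).mpr h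
  rw [count_map_incb] at this
  simp at this

lemma getD_mem {l : List ℕ} {i : ℕ} (h : i < l.length) : l.getD i 0 ∈ l := by
  rw [List.getD_eq_getElem _ _ h]; exact List.getElem_mem h

lemma mem_range_of_stirling {n : ℕ} {σ : List ℕ} (hc : ∀ i : ℕ,
    σ.count i = if 1 ≤ i ∧ i ≤ n then 2 else 0) {v : ℕ} (hv : v ∈ σ) :
    1 ≤ v ∧ v ≤ n := by
  have h1 := (List.count_pos_iff).mpr hv
  rw [hc v] at h1
  by_contra h
  rw [if_neg h] at h1
  omega

lemma structure_lemma {n : ℕ} (hn : 2 ≤ n) {σ : List ℕ} (hσ : σ ∈ QAvoid n [1, 3, 2])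
    (hne : σ.getD 0 0 ≠ σ.getD 1 0) :
    ∃ a w, σ = a :: (a + 1) :: (a + 1) :: w ∧ 1 ≤ a ∧ a + 1 ≤ n ∧ (a + 1) ∉ w ∧ w ≠ [] := by
  obtain ⟨⟨hc, hg⟩, hav⟩ := mem_QAvoid.mp hσ
  have hlen : σ.length = 2 * n := stirling_length ⟨hc, hg⟩
  have hav2 : ¬ ∃ i j k : ℕ, i < j ∧ j < k ∧ k < σ.length ∧
      σ.getD i 0 < σ.getD k 0 ∧ σ.getD k 0 < σ.getD j 0 :=
    fun h => hav ((contains_132_iff σ).mpr h)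
  rcases σ with _ | ⟨x, _ | ⟨y, _ | ⟨z, rest⟩⟩⟩
  · simp at hlen; omega
  · simp at hlen; omega
  · simp at hlen; omega
  have hne' : x ≠ y := by simpa using hne
  have hlen' : rest.length + 3 = 2 * n := by simpa using hlen
  -- step 1 : x < y
  have hxr := mem_range_of_stirling hc (List.mem_cons_self (a := x))
  have hyr := mem_range_of_stirling hc (List.mem_cons_of_mem x (List.mem_cons_self (a := y)))
  have hcx := hc x
  rw [List.count_cons_self, if_pos hxr] at hcx
  have hmx : x ∈ (y :: z :: rest) := by
    rw [← List.count_pos_iff]; omega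
  obtain ⟨m, hmlt, hmv⟩ := List.mem_iff_getElem.mp hmx
  have hm0 : m ≠ 0 := by
    intro h; subst h; simp at hmv; exact hne' hmv.symm
  have hgm : (x :: y :: z :: rest).getD (m + 1) 0 = x := by
    rw [List.getD_cons_succ, List.getD_eq_getElem _ _ hmlt, hmv]
  have hxy : x < y := by
    have := hg 0 1 (m + 1) (by omega) (by omega)
      (by simpa using Nat.succ_lt_succ hmlt)
      (by simpa using hgm.symm)
    simpa using this
  -- step 2 : z = y
  have hcy := hc y
  rw [List.count_cons_of_ne (by omega), List.count_cons_self, if_pos hyr] at hcy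
  have hmy : y ∈ (z :: rest) := by
    rw [← List.count_pos_iff]; omega
  obtain ⟨m2, hm2lt, hm2v⟩ := List.mem_iff_getElem.mp hmy
  have hgm2 : (x :: y :: z :: rest).getD (m2 + 2) 0 = y := by
    rw [List.getD_cons_succ, List.getD_cons_succ, List.getD_eq_getElem _ _ hm2lt, hm2v]
  have hzy : z = y := by
    by_contra hzy
    have hm20 : m2 ≠ 0 := by
      intro h; subst h; simp at hm2v; exact hzy hm2v
    have hylz : y < z := by
      have := hg 1 2 (m2 + 2) (by omega) (by omega)
        (by simp only [List.length_cons] at hm2lt ⊢; omega)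
        (by rw [hgm2]; simp)
      simpa using this
    exact hav2 ⟨0, 2, m2 + 2, by omega, by omega,
      by simp only [List.length_cons] at hm2lt ⊢; omega, by
      simp only [List.getD_cons_zero]; rw [hgm2]; exact hxy, by
      rw [hgm2]; simpa using hylz⟩
  -- step 3 : y = x + 1
  have hyx1 : y = x + 1 := by
    by_contra hyne
    have hx1r : 1 ≤ x + 1 ∧ x + 1 ≤ n := by omega
    have hcx1 := hc (x + 1)
    rw [if_pos hx1r] at hcx1
    have hmx1 : (x + 1) ∈ (x :: y :: z :: rest) := by
      rw [← List.count_pos_iff]; omega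
    obtain ⟨t, htlt, htv⟩ := List.mem_iff_getElem.mp hmx1
    have ht0 : t ≠ 0 := by intro h; subst h; simp at htv
    have ht1 : t ≠ 1 := by intro h; subst h; simp at htv; omega
    have ht2 : t ≠ 2 := by intro h; subst h; simp at htv; omega
    exact hav2 ⟨0, 1, t, by omega, by omega, htlt, by
      rw [List.getD_eq_getElem _ _ htlt, htv]; simpa using by omega, by
      rw [List.getD_eq_getElem _ _ htlt, htv]; simpa using by omega⟩
  -- step 4 : (x+1) ∉ rest
  subst hzy hyx1
  have hcx1 := hc (x + 1)
  rw [List.count_cons_of_ne (by omega), List.count_cons_self, List.count_cons_self,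
    if_pos (by omega : 1 ≤ x + 1 ∧ x + 1 ≤ n)] at hcx1
  have hnm : (x + 1) ∉ rest := by
    rw [← List.count_eq_zero]; omega
  exact ⟨x, rest, rfl, hxr.1, hyr.2, hnm, by
    intro h; subst h; simp at hlen'; omega⟩

lemma decb_id {b x : ℕ} (h : ¬ b < x) : decb b x = x := if_neg h

lemma F_mem {n a : ℕ} {w : List ℕ} (hn : 2 ≤ n)
    (hσ : (a :: (a + 1) :: (a + 1) :: w) ∈ QAvoid n [1, 3, 2]) (hbw : (a + 1) ∉ w) :
    (a :: w.map (decb (a + 1))) ∈ QAvoid (n - 1) [1, 3, 2] := by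
  obtain ⟨⟨hc, hg⟩, hav⟩ := mem_QAvoid.mp hσ
  set b := a + 1 with hbdef
  have hwne : ∀ v ∈ w, v ≠ b := fun v hv h => hbw (h ▸ hv)
  have ha_ne : a ≠ b := by omega
  have har : 1 ≤ a ∧ a ≤ n := mem_range_of_stirling hc List.mem_cons_self
  have hbr : 1 ≤ b ∧ b ≤ n := mem_range_of_stirling hc
    (List.mem_cons_of_mem _ List.mem_cons_self)
  have hσget : ∀ m : ℕ, (a :: b :: b :: w).getD (m + 3) 0 = w.getD m 0 := fun m => rfl
  have h0σ : (a :: b :: b :: w).getD 0 0 = a := rfl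
  have h0τ : (a :: w.map (decb b)).getD 0 0 = a := rfl
  have hτget : ∀ m, m < w.length →
      (a :: w.map (decb b)).getD (m + 1) 0 = decb b (w.getD m 0) := by
    intro m hm
    rw [List.getD_cons_succ, List.getD_eq_getElem _ _ (by simpa using hm), List.getElem_map,
      List.getD_eq_getElem _ _ hm]
  have hwm : ∀ m, m < w.length → w.getD m 0 ≠ b := fun m hm => hwne _ (getD_mem hm)
  have hσlen : (a :: b :: b :: w).length = w.length + 3 := by simp
  have hτlen : (a :: w.map (decb b)).length = w.length + 1 := by simp
  have hav2 : ¬ ∃ i j k : ℕ, i < j ∧ j < k ∧ k < (a :: b :: b :: w).length ∧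
      (a :: b :: b :: w).getD i 0 < (a :: b :: b :: w).getD k 0 ∧
      (a :: b :: b :: w).getD k 0 < (a :: b :: b :: w).getD j 0 :=
    fun h => hav ((contains_132_iff _).mpr h)
  have hda : decb b a = a := decb_id (by omega)
  rw [mem_QAvoid]
  refine ⟨⟨?_, ?_⟩, ?_⟩
  · -- counts
    intro i
    have h1 := hc i
    have h2 := hc (i + 1)
    simp only [List.count_cons, beq_iff_eq, List.count_nil] at h1 h2
    rw [List.count_cons, count_map_decb hbw]
    simp only [beq_iff_eq]
    split_ifs at h1 h2 ⊢ <;> omega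
  · -- gap condition
    intro j k l hjk hkl hl heq
    rw [hτlen] at hl
    obtain ⟨l', rfl⟩ : ∃ l', l = l' + 1 := ⟨l - 1, by omega⟩
    obtain ⟨k', rfl⟩ : ∃ k', k = k' + 1 := ⟨k - 1, by omega⟩
    have hl' : l' < w.length := by omega
    have hk' : k' < w.length := by omega
    rw [hτget l' hl'] at heq
    rcases j with _ | j'
    · rw [h0τ] at heq ⊢
      rw [hτget k' hk']
      have hwl : w.getD l' 0 = a :=
        ((decb_eq ha_ne (hwm l' hl')).mp (by rw [hda]; exact heq)).symm
      have hs := hg 0 (k' + 3) (l' + 3) (by omega) (by omega) (by rw [hσlen]; omega)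
        (by rw [hσget l', h0σ]; exact hwl.symm)
      rw [h0σ, hσget k'] at hs
      rw [← hda]
      exact (decb_lt ha_ne (hwm k' hk')).mpr hs
    · have hj' : j' < w.length := by omega
      rw [hτget j' hj'] at heq ⊢
      rw [hτget k' hk']
      have hwjl := (decb_eq (hwm j' hj') (hwm l' hl')).mp heq
      have hs := hg (j' + 3) (k' + 3) (l' + 3) (by omega) (by omega) (by rw [hσlen]; omega)
        (by rw [hσget l', hσget j']; exact hwjl)
      rw [hσget k', hσget j'] at hs
      exact (decb_lt (hwm j' hj') (hwm k' hk')).mpr hs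
  · -- avoidance
    intro hcon
    obtain ⟨i, j, k, hij, hjk, hk, h1, h2⟩ := (contains_132_iff _).mp hcon
    rw [hτlen] at hk
    obtain ⟨k', rfl⟩ : ∃ k', k = k' + 1 := ⟨k - 1, by omega⟩
    obtain ⟨j', rfl⟩ : ∃ j', j = j' + 1 := ⟨j - 1, by omega⟩
    have hk' : k' < w.length := by omega
    have hj' : j' < w.length := by omega
    rw [hτget j' hj', hτget k' hk'] at h2
    rw [hτget k' hk'] at h1
    have hwkj := (decb_lt (hwm k' hk') (hwm j' hj')).mp h2
    rcases i with _ | i'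
    · rw [h0τ, ← hda] at h1
      have hak := (decb_lt ha_ne (hwm k' hk')).mp h1
      exact hav2 ⟨0, j' + 3, k' + 3, by omega, by omega, by rw [hσlen]; omega,
        by rw [hσget k', h0σ]; exact hak, by rw [hσget k', hσget j']; exact hwkj⟩
    · have hi' : i' < w.length := by omega
      rw [hτget i' hi'] at h1
      have hik := (decb_lt (hwm i' hi') (hwm k' hk')).mp h1
      exact hav2 ⟨i' + 3, j' + 3, k' + 3, by omega, by omega, by rw [hσlen]; omega,
        by rw [hσget k', hσget i']; exact hik, by rw [hσget k', hσget j']; exact hwkj⟩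

lemma incb_ne_b {a x : ℕ} : incb a x ≠ a + 1 := by unfold incb; split_ifs <;> omega
lemma incb_eq_a {a x : ℕ} : incb a x = a ↔ x = a := by unfold incb; split_ifs <;> omega
lemma incb_gt {a x : ℕ} : a < incb a x ↔ a < x := by unfold incb; split_ifs <;> omega
lemma incb_gt_b {a x : ℕ} : a + 1 < incb a x ↔ a < x := by unfold incb; split_ifs <;> omega

lemma G_mem {n a : ℕ} {t : List ℕ} (hn : 2 ≤ n)
    (hτ : (a :: t) ∈ QAvoid (n - 1) [1, 3, 2]) :
    (a :: (a + 1) :: (a + 1) :: t.map (incb a)) ∈ QAvoid n [1, 3, 2] := by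
  obtain ⟨⟨hc, hg⟩, hav⟩ := mem_QAvoid.mp hτ
  set b := a + 1 with hbdef
  have har : 1 ≤ a ∧ a ≤ n - 1 := mem_range_of_stirling hc List.mem_cons_self
  have hτlen : (a :: t).length = 2 * (n - 1) := stirling_length ⟨hc, hg⟩
  have htlen : t.length = 2 * n - 3 := by simp at hτlen; omega
  have hσget : ∀ m, m < t.length →
      (a :: b :: b :: t.map (incb a)).getD (m + 3) 0 = incb a (t.getD m 0) := by
    intro m hm
    show (t.map (incb a)).getD m 0 = _
    rw [List.getD_eq_getElem _ _ (by simpa using hm), List.getElem_map,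
      List.getD_eq_getElem _ _ hm]
  have hτget : ∀ m : ℕ, (a :: t).getD (m + 1) 0 = t.getD m 0 := fun m => rfl
  have h0σ : (a :: b :: b :: t.map (incb a)).getD 0 0 = a := rfl
  have h1σ : (a :: b :: b :: t.map (incb a)).getD 1 0 = b := rfl
  have h2σ : (a :: b :: b :: t.map (incb a)).getD 2 0 = b := rfl
  have h0τ : (a :: t).getD 0 0 = a := rfl
  have hσlen : (a :: b :: b :: t.map (incb a)).length = t.length + 3 := by simp
  have hav2 : ¬ ∃ i j k : ℕ, i < j ∧ j < k ∧ k < (a :: t).length ∧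
      (a :: t).getD i 0 < (a :: t).getD k 0 ∧ (a :: t).getD k 0 < (a :: t).getD j 0 :=
    fun h => hav ((contains_132_iff _).mpr h)
  rw [mem_QAvoid]
  refine ⟨⟨?_, ?_⟩, ?_⟩
  · -- counts
    intro i
    have h1 := hc i
    have h2 := hc (i - 1)
    simp only [List.count_cons, beq_iff_eq, List.count_nil] at h1 h2
    rw [List.count_cons, List.count_cons, List.count_cons, count_map_incb]
    simp only [beq_iff_eq]
    split_ifs at h1 h2 ⊢ <;> omega
  · -- gap condition
    intro j k l hjk hkl hl heq
    rw [hσlen] at hl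
    rcases j with _ | (_ | (_ | j'))
    · -- j = 0
      rw [h0σ] at heq ⊢
      rcases l with _ | (_ | (_ | l')) <;> [omega; skip; skip; skip]
      · rw [h1σ] at heq; omega
      · rw [h2σ] at heq; omega
      · have hl' : l' < t.length := by omega
        rw [hσget l' hl'] at heq
        have htl : t.getD l' 0 = a := incb_eq_a.mp heq.symm
        rcases k with _ | (_ | (_ | k'))
        · omega
        · rw [h1σ]; omega
        · rw [h2σ]; omega
        · have hk' : k' < t.length := by omega
          rw [hσget k' hk']
          have hs := hg 0 (k' + 1) (l' + 1) (by omega) (by omega)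
            (by simp; omega) (by rw [hτget l', h0τ]; exact htl.symm)
          rw [h0τ, hτget k'] at hs
          exact incb_gt.mpr hs
    · -- j = 1
      rcases l with _ | (_ | (_ | l'))
      · omega
      · omega
      · omega
      · have hl' : l' < t.length := by omega
        rw [h1σ, hσget l' hl'] at heq
        exact absurd heq.symm incb_ne_b
    · -- j = 2
      rcases l with _ | (_ | (_ | l'))
      · omega
      · omega
      · omega
      · have hl' : l' < t.length := by omega
        rw [h2σ, hσget l' hl'] at heq
        exact absurd heq.symm incb_ne_b
    · -- j ≥ 3
      rcases l with _ | (_ | (_ | l'))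
      · omega
      · omega
      · omega
      rcases k with _ | (_ | (_ | k'))
      · omega
      · omega
      · omega
      have hj' : j' < t.length := by omega
      have hk' : k' < t.length := by omega
      have hl' : l' < t.length := by omega
      rw [hσget j' hj', hσget l' hl'] at heq
      rw [hσget j' hj', hσget k' hk']
      have htjl : t.getD j' 0 = t.getD l' 0 := incb_eq.mp heq
      have hs := hg (j' + 1) (k' + 1) (l' + 1) (by omega) (by omega)
        (by simp; omega) (by rw [hτget l', hτget j']; exact htjl)
      rw [hτget j', hτget k'] at hs
      exact incb_lt.mpr hs
  · -- avoidance
    intro hcon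
    obtain ⟨i, j, k, hij, hjk, hk, h1, h2⟩ := (contains_132_iff _).mp hcon
    rw [hσlen] at hk
    rcases j with _ | (_ | (_ | j'))
    · omega
    · -- j = 1 : σ_j = b
      rw [h1σ] at h2
      rcases i with _ | i'
      · rw [h0σ] at h1; omega
      · omega
    · -- j = 2
      rw [h2σ] at h2
      rcases i with _ | (_ | i')
      · rw [h0σ] at h1; omega
      · rw [h1σ] at h1; omega
      · omega
    · -- j ≥ 3
      rcases k with _ | (_ | (_ | k'))
      · omega
      · omega
      · omega
      have hj' : j' < t.length := by omega
      have hk' : k' < t.length := by omega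
      rw [hσget j' hj', hσget k' hk'] at h2
      rw [hσget k' hk'] at h1
      have htkj : t.getD k' 0 < t.getD j' 0 := incb_lt.mp h2
      rcases i with _ | (_ | (_ | i'))
      · rw [h0σ] at h1
        exact hav2 ⟨0, j' + 1, k' + 1, by omega, by omega, by simp; omega,
          by rw [hτget k', h0τ]; exact incb_gt.mp h1,
          by rw [hτget k', hτget j']; exact htkj⟩
      · rw [h1σ] at h1
        exact hav2 ⟨0, j' + 1, k' + 1, by omega, by omega, by simp; omega,
          by rw [hτget k', h0τ]; exact incb_gt_b.mp h1,
          by rw [hτget k', hτget j']; exact htkj⟩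
      · rw [h2σ] at h1
        exact hav2 ⟨0, j' + 1, k' + 1, by omega, by omega, by simp; omega,
          by rw [hτget k', h0τ]; exact incb_gt_b.mp h1,
          by rw [hτget k', hτget j']; exact htkj⟩
      · have hi' : i' < t.length := by omega
        rw [hσget i' hi'] at h1
        exact hav2 ⟨i' + 1, j' + 1, k' + 1, by omega, by omega, by simp; omega,
          by rw [hτget k', hτget i']; exact incb_lt.mp h1,
          by rw [hτget k', hτget j']; exact htkj⟩

def Fmap (σ : List ℕ) : List ℕ :=
  σ.getD 0 0 :: ((σ.drop 3).map (decb (σ.getD 0 0 + 1)))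

def Gmap (τ : List ℕ) : List ℕ :=
  τ.getD 0 0 :: (τ.getD 0 0 + 1) :: (τ.getD 0 0 + 1) :: (τ.tail.map (incb (τ.getD 0 0)))

lemma Fmap_eq (a : ℕ) (w : List ℕ) :
    Fmap (a :: (a + 1) :: (a + 1) :: w) = a :: w.map (decb (a + 1)) := rfl

lemma Gmap_eq (a : ℕ) (t : List ℕ) :
    Gmap (a :: t) = a :: (a + 1) :: (a + 1) :: t.map (incb a) := rfl

lemma GF_id {a : ℕ} {w : List ℕ} (hb : (a + 1) ∉ w) :
    Gmap (Fmap (a :: (a + 1) :: (a + 1) :: w)) = a :: (a + 1) :: (a + 1) :: w := by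
  rw [Fmap_eq, Gmap_eq]
  congr 1; congr 2
  rw [List.map_map]
  have h : ∀ x ∈ w, (incb a ∘ decb (a + 1)) x = x := fun x hx =>
    incb_decb (fun h => hb (h ▸ hx))
  rw [List.map_congr_left h]; simp

lemma FG_id (a : ℕ) (t : List ℕ) : Fmap (Gmap (a :: t)) = a :: t := by
  rw [Gmap_eq, Fmap_eq]
  congr 1
  rw [List.map_map]
  have h : ∀ x ∈ t, (decb (a + 1) ∘ incb a) x = x := fun x _ => decb_incb a x
  rw [List.map_congr_left h]; simp

lemma statCount_decb (R : ℕ → ℕ → Prop) (b : ℕ) (l : List ℕ) (hb : b ∉ l)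
    (hR : ∀ x y : ℕ, x ≠ b → y ≠ b → (R (decb b x) (decb b y) ↔ R x y)) :
    statCount R (l.map (decb b)) = statCount R l :=
  statCount_map R _ l (fun x hx y hy =>
    hR x y (fun h => hb (h ▸ hx)) (fun h => hb (h ▸ hy)))

lemma wt_rel {a c : ℕ} {u : List ℕ} (hb : (a + 1) ∉ (c :: u)) :
    platStat (a :: (a + 1) :: (a + 1) :: c :: u)
        = platStat (a :: (c :: u).map (decb (a + 1))) + (if c = a then 0 else 1) ∧
    desStat (a :: (a + 1) :: (a + 1) :: c :: u)
        = desStat (a :: (c :: u).map (decb (a + 1))) + (if c = a then 1 else 0) ∧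
    ascStat (a :: (a + 1) :: (a + 1) :: c :: u)
        = ascStat (a :: (c :: u).map (decb (a + 1))) + 1 := by
  have hca : c ≠ a + 1 := fun h => hb (h ▸ List.mem_cons_self (a := c) (l := u))
  have hmap : (a :: (c :: u).map (decb (a + 1))) = (a :: c :: u).map (decb (a + 1)) := by
    rw [List.map_cons (f := decb (a+1)) (a := a), decb_id (by omega)]
  have hbl : (a + 1) ∉ (a :: c :: u) := by
    intro h
    rcases List.mem_cons.mp h with h | h
    · omega
    · exact hb h
  refine ⟨?_, ?_, ?_⟩
  · show statCount _ _ = statCount _ _ + _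
    rw [hmap, statCount_decb (· = ·) _ _ hbl (fun x y hx hy => decb_eq hx hy),
      statCount_cons_cons, statCount_cons_cons, statCount_cons_cons, statCount_cons_cons]
    split_ifs <;> omega
  · show statCount _ _ = statCount _ _ + _
    rw [hmap, statCount_decb (· > ·) _ _ hbl (fun x y hx hy => decb_lt hy hx),
      statCount_cons_cons, statCount_cons_cons, statCount_cons_cons, statCount_cons_cons]
    split_ifs <;> omega
  · show statCount _ _ = statCount _ _ + _
    rw [hmap, statCount_decb (· < ·) _ _ hbl (fun x y hx hy => decb_lt hx hy),
      statCount_cons_cons, statCount_cons_cons, statCount_cons_cons, statCount_cons_cons]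
    split_ifs <;> omega

open MvPolynomial in
lemma wt_eq_F {n : ℕ} (hn : 2 ≤ n) {σ : List ℕ} (hσ : σ ∈ QAvoid n [1, 3, 2])
    (hne : σ.getD 0 0 ≠ σ.getD 1 0) :
    (X 0 ^ platStat σ * X 1 ^ desStat σ * X 2 ^ ascStat σ : MvPolynomial (Fin 3) ℤ) =
      (if (Fmap σ).getD 0 0 = (Fmap σ).getD 1 0 then X 1 * X 2 else X 0 * X 2) *
        (X 0 ^ platStat (Fmap σ) * X 1 ^ desStat (Fmap σ) * X 2 ^ ascStat (Fmap σ)) := by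
  obtain ⟨a, w, rfl, ha1, han, hbw, hwne⟩ := structure_lemma hn hσ hne
  rcases w with _ | ⟨c, u⟩
  · exact absurd rfl hwne
  obtain ⟨hplat, hdes, hasc⟩ := wt_rel hbw
  have hcne : c ≠ a + 1 := fun h => hbw (h ▸ List.mem_cons_self (a := c) (l := u))
  have hcond : ((Fmap (a :: (a+1) :: (a+1) :: c :: u)).getD 0 0
      = (Fmap (a :: (a+1) :: (a+1) :: c :: u)).getD 1 0) ↔ c = a := by
    rw [Fmap_eq]
    show (a = decb (a + 1) c) ↔ _
    rw [eq_comm]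
    exact decb_eq_iff hcne
  rw [Fmap_eq] at hcond ⊢
  rw [hplat, hdes, hasc]
  by_cases hca : c = a
  · rw [if_pos (hcond.mpr hca), if_pos hca, if_pos hca, add_zero, pow_add, pow_add]
    ring
  · rw [if_neg (fun h => hca (hcond.mp h)), if_neg hca, if_neg hca, add_zero, pow_add, pow_add]
    ring

lemma prefix_ii {σ : List ℕ} (h : 2 ≤ σ.length) (i : ℕ) :
    [i, i] <+: σ ↔ (σ.getD 0 0 = i ∧ σ.getD 1 0 = i) := by
  rcases σ with _ | ⟨x, _ | ⟨y, rest⟩⟩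
  · simp at h
  · simp at h
  · rw [List.cons_prefix_cons, List.cons_prefix_cons]
    simp only [List.nil_prefix, and_true, List.getD_cons_zero, List.getD_cons_succ]
    constructor
    · rintro ⟨rfl, rfl⟩; exact ⟨rfl, rfl⟩
    · rintro ⟨rfl, rfl⟩; exact ⟨rfl, rfl⟩

open MvPolynomial in
lemma sum_pre {m : ℕ} (hm : 1 ≤ m) :
    ∑ i ∈ Finset.Icc 1 m, g132pre m [i, i]
      = ∑ σ ∈ (QAvoid m [1, 3, 2]).filter (fun σ => σ.getD 0 0 = σ.getD 1 0),
          X 0 ^ platStat σ * X 1 ^ desStat σ * X 2 ^ ascStat σ := by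
  rw [← Finset.sum_fiberwise_of_maps_to (g := fun σ : List ℕ => σ.getD 0 0)
    (t := Finset.Icc 1 m) ?hmaps]
  case hmaps =>
    intro σ hσ
    rw [Finset.mem_filter] at hσ
    obtain ⟨hS, -⟩ := hσ
    obtain ⟨hst, -⟩ := mem_QAvoid.mp hS
    have hlen : σ.length = 2 * m := stirling_length hst
    have hmem : σ.getD 0 0 ∈ σ := getD_mem (by omega)
    have := mem_range_of_stirling hst.1 hmem
    exact Finset.mem_Icc.mpr this
  apply Finset.sum_congr rfl
  intro i hi
  unfold g132pre
  apply Finset.sum_congr ?_ (fun _ _ => rfl)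
  ext σ
  simp only [Finset.mem_filter]
  constructor
  · rintro ⟨hS, hpre⟩
    have hlen : σ.length = 2 * m := stirling_length (mem_QAvoid.mp hS).1
    rw [prefix_ii (by omega)] at hpre
    exact ⟨⟨hS, hpre.1.trans hpre.2.symm⟩, hpre.1⟩
  · rintro ⟨⟨hS, heq⟩, h0⟩
    have hlen : σ.length = 2 * m := stirling_length (mem_QAvoid.mp hS).1
    exact ⟨hS, (prefix_ii (by omega) i).mpr ⟨h0, heq ▸ h0⟩⟩

open MvPolynomial in
/-- Recurrence `g(n) − p·r·g(n−1) = Σ_{i=1}^{n} g(n|ii) + r·(q−p)·Σ_{i=1}^{n−1} g(n−1|ii)`. -/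
theorem g132_recurrence (n : ℕ) (hn : 2 ≤ n) (p q r : MvPolynomial (Fin 3) ℤ)
    (hp : p = X 0) (hq : q = X 1) (hr : r = X 2) :
    g132 n - p * r * g132 (n - 1) =
      (∑ i ∈ Finset.Icc 1 n, g132pre n [i, i]) +
        r * (q - p) * ∑ i ∈ Finset.Icc 1 (n - 1), g132pre (n - 1) [i, i] := by
  subst hp hq hr
  have htau_ne : ∀ τ ∈ QAvoid (n - 1) [1, 3, 2], τ ≠ [] := by
    intro τ hτ h
    subst h
    have := stirling_length (mem_QAvoid.mp hτ).1
    simp at this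
    omega
  have hsplit : g132 n = (∑ i ∈ Finset.Icc 1 n, g132pre n [i, i])
      + ∑ σ ∈ (QAvoid n [1, 3, 2]).filter (fun σ => ¬ (σ.getD 0 0 = σ.getD 1 0)),
          X 0 ^ platStat σ * X 1 ^ desStat σ * X 2 ^ ascStat σ := by
    unfold g132
    rw [← Finset.sum_filter_add_sum_filter_not (QAvoid n [1, 3, 2])
      (fun σ => σ.getD 0 0 = σ.getD 1 0), sum_pre (by omega)]
  have hbij : ∑ σ ∈ (QAvoid n [1, 3, 2]).filter (fun σ => ¬ (σ.getD 0 0 = σ.getD 1 0)),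
          (X 0 ^ platStat σ * X 1 ^ desStat σ * X 2 ^ ascStat σ : MvPolynomial (Fin 3) ℤ)
      = ∑ τ ∈ QAvoid (n - 1) [1, 3, 2],
          (if τ.getD 0 0 = τ.getD 1 0 then X 1 * X 2 else X 0 * X 2) *
            (X 0 ^ platStat τ * X 1 ^ desStat τ * X 2 ^ ascStat τ) := by
    refine Finset.sum_nbij' Fmap Gmap ?_ ?_ ?_ ?_ ?_
    · intro σ hσ
      rw [Finset.mem_filter] at hσ
      obtain ⟨a, w, rfl, -, -, hbw, -⟩ := structure_lemma hn hσ.1 hσ.2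
      rw [Fmap_eq]
      exact F_mem hn hσ.1 hbw
    · intro τ hτ
      rcases τ with _ | ⟨a, t⟩
      · exact absurd rfl (htau_ne _ hτ)
      rw [Gmap_eq, Finset.mem_filter]
      refine ⟨G_mem hn hτ, ?_⟩
      show ¬ (a = a + 1)
      omega
    · intro σ hσ
      rw [Finset.mem_filter] at hσ
      obtain ⟨a, w, rfl, -, -, hbw, -⟩ := structure_lemma hn hσ.1 hσ.2
      exact GF_id hbw
    · intro τ hτ
      rcases τ with _ | ⟨a, t⟩
      · exact absurd rfl (htau_ne _ hτ)
      exact FG_id a t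
    · intro σ hσ
      rw [Finset.mem_filter] at hσ
      exact wt_eq_F hn hσ.1 hσ.2
  have hsum2 : ∑ τ ∈ QAvoid (n - 1) [1, 3, 2],
          (if τ.getD 0 0 = τ.getD 1 0 then X 1 * X 2 else X 0 * X 2) *
            (X 0 ^ platStat τ * X 1 ^ desStat τ * X 2 ^ ascStat τ)
      = X 0 * X 2 * g132 (n - 1) +
          (X 1 - X 0) * X 2 * ∑ i ∈ Finset.Icc 1 (n - 1), g132pre (n - 1) [i, i] := by
    rw [← Finset.sum_filter_add_sum_filter_not (QAvoid (n - 1) [1, 3, 2])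
      (fun τ => τ.getD 0 0 = τ.getD 1 0)]
    have e1 : ∑ τ ∈ (QAvoid (n - 1) [1, 3, 2]).filter (fun τ => τ.getD 0 0 = τ.getD 1 0),
          (if τ.getD 0 0 = τ.getD 1 0 then X 1 * X 2 else X 0 * X 2) *
            ((X 0 : MvPolynomial (Fin 3) ℤ) ^ platStat τ * X 1 ^ desStat τ * X 2 ^ ascStat τ)
        = (X 1 * X 2) * ∑ τ ∈ (QAvoid (n - 1) [1, 3, 2]).filter
            (fun τ => τ.getD 0 0 = τ.getD 1 0),
            X 0 ^ platStat τ * X 1 ^ desStat τ * X 2 ^ ascStat τ := by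
      rw [Finset.mul_sum]
      apply Finset.sum_congr rfl
      intro τ hτ
      rw [Finset.mem_filter] at hτ
      rw [if_pos hτ.2]
    have e2 : ∑ τ ∈ (QAvoid (n - 1) [1, 3, 2]).filter (fun τ => ¬ (τ.getD 0 0 = τ.getD 1 0)),
          (if τ.getD 0 0 = τ.getD 1 0 then X 1 * X 2 else X 0 * X 2) *
            ((X 0 : MvPolynomial (Fin 3) ℤ) ^ platStat τ * X 1 ^ desStat τ * X 2 ^ ascStat τ)
        = (X 0 * X 2) * ∑ τ ∈ (QAvoid (n - 1) [1, 3, 2]).filter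
            (fun τ => ¬ (τ.getD 0 0 = τ.getD 1 0)),
            X 0 ^ platStat τ * X 1 ^ desStat τ * X 2 ^ ascStat τ := by
      rw [Finset.mul_sum]
      apply Finset.sum_congr rfl
      intro τ hτ
      rw [Finset.mem_filter] at hτ
      rw [if_neg hτ.2]
    rw [e1, e2]
    have hg : g132 (n - 1)
        = (∑ τ ∈ (QAvoid (n - 1) [1, 3, 2]).filter (fun τ => τ.getD 0 0 = τ.getD 1 0),
            X 0 ^ platStat τ * X 1 ^ desStat τ * X 2 ^ ascStat τ)
          + ∑ τ ∈ (QAvoid (n - 1) [1, 3, 2]).filter (fun τ => ¬ (τ.getD 0 0 = τ.getD 1 0)),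
            X 0 ^ platStat τ * X 1 ^ desStat τ * X 2 ^ ascStat τ := by
      unfold g132
      rw [← Finset.sum_filter_add_sum_filter_not (QAvoid (n - 1) [1, 3, 2])
        (fun τ => τ.getD 0 0 = τ.getD 1 0)]
    rw [hg, sum_pre (by omega : 1 ≤ n - 1)]
    ring
  rw [hsplit, hbij, hsum2, sum_pre (by omega : 1 ≤ n - 1)]
  ring
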